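/- Let μ be a stationary distribution of a PIN model whose interaction pattern is the complete directed graph on n ≥ 2 nodes (all ordered pairs of distinct nodes are links). Suppose V : ℝ^𝒜 → ℝ is twice continuously differentiable and ∇V(θ)·D̄(θ) ≤ 0 for all θ ∈ P(𝒜). Then there exists a constant C > 0 depending only on V such that for every δ > 0, μ({x ∈ 𝒳 : ∇V(θ(x))·D̄(θ(x)) > −δ}) ≥ 1 − C/(nδ). -/

import Mathlib

open Finset Filter

noncomputable section

/-- The empirical type (state frequencies) of a configuration. -/
def confType {V A : Type*} [Fintype V] [DecidableEq A] (x : V → A) (i : A) : ℝ :=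
  ((Finset.univ.filter fun v => x v = i).card : ℝ) / (Fintype.card V : ℝ)

/-- The boundary (empirical link-pair frequencies) of a configuration. -/
def boundary {V A : Type*} [DecidableEq A] (E : Finset (V × V)) (x : V → A) (i j : A) : ℝ :=
  ((E.filter fun e => x e.1 = i ∧ x e.2 = j).card : ℝ) / (E.card : ℝ)

/-- Off-diagonal part of the PIN transition matrix. -/
def Toff {V A : Type*} [Fintype V] [DecidableEq V] [DecidableEq A]
    (E : Finset (V × V)) (ρ : ℝ) (P : A → A → ℝ) (φ : A → A → A → ℝ) (x y : V → A) : ℝ :=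
  if (Finset.univ.filter fun v => x v ≠ y v).card = 1 then
    ∑ u ∈ Finset.univ.filter fun v => x v ≠ y v,
      ((1 - ρ) * (1 / (Fintype.card V : ℝ)) * P (x u) (y u)
        + (ρ / (E.card : ℝ)) * ∑ e ∈ E.filter fun e => e.1 = u, φ (x u) (y u) (x e.2))
  else 0

/-- The PIN transition matrix. -/
def pinTrans {V A : Type*} [Fintype V] [DecidableEq V] [Fintype A] [DecidableEq A]
    (E : Finset (V × V)) (ρ : ℝ) (P : A → A → ℝ) (φ : A → A → A → ℝ) (x y : V → A) : ℝ :=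
  if x = y then 1 - ∑ z : V → A, Toff E ρ P φ x z else Toff E ρ P φ x y

/-- The mean drift of the PIN model. -/
def meanDrift {V A : Type*} [Fintype V] [DecidableEq V] [Fintype A] [DecidableEq A]
    (E : Finset (V × V)) (ρ : ℝ) (P : A → A → ℝ) (φ : A → A → A → ℝ) (x : V → A) (i : A) : ℝ :=
  (Fintype.card V : ℝ) * ∑ y : V → A, pinTrans E ρ P φ x y * (confType y i - confType x i)

/-- The limit drift of the PIN model. -/
def limitDrift {A : Type*} [Fintype A] (ρ : ℝ) (P : A → A → ℝ) (φ : A → A → A → ℝ)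
    (θ : A → ℝ) (i : A) : ℝ :=
  ((1 - ρ) * ∑ j, P j i * θ j) + (ρ * ∑ ℓ, θ ℓ * ∑ j, φ j i ℓ * θ j) - θ i

/-- The linear operator Q acting on boundaries. -/
def Qop {A : Type*} [Fintype A] (φ : A → A → A → ℝ) (ξ : A → A → ℝ) (i : A) : ℝ :=
  (∑ ℓ, ∑ j, ξ j ℓ * φ j i ℓ) - ∑ ℓ, ξ i ℓ

/-- Membership in the probability simplex over `A`. -/
def inSimplex {A : Type*} [Fintype A] (θ : A → ℝ) : Prop :=
  (∀ i, 0 ≤ θ i) ∧ ∑ i, θ i = 1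

/-- The hypotheses on the parameters of a PIN model: `ρ ∈ [0,1]`, `P` and each `φ(ℓ)`
row-stochastic and nonnegative, the interaction graph nonempty and without self-loops. -/
def IsPinModel {V A : Type*} [Fintype A] (E : Finset (V × V)) (ρ : ℝ)
    (P : A → A → ℝ) (φ : A → A → A → ℝ) : Prop :=
  0 ≤ ρ ∧ ρ ≤ 1 ∧ (∀ i j, 0 ≤ P i j) ∧ (∀ i, ∑ j, P i j = 1) ∧
    (∀ i j ℓ, 0 ≤ φ i j ℓ) ∧ (∀ i ℓ, ∑ j, φ i j ℓ = 1) ∧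
    E.Nonempty ∧ ∀ e ∈ E, e.1 ≠ e.2

/-- Stationary distribution of a PIN model. -/
def IsStationaryPIN {V A : Type*} [Fintype V] [DecidableEq V] [Fintype A] [DecidableEq A]
    (E : Finset (V × V)) (ρ : ℝ) (P : A → A → ℝ) (φ : A → A → A → ℝ)
    (μ : (V → A) → ℝ) : Prop :=
  (∀ x, 0 ≤ μ x) ∧ (∑ x : V → A, μ x = 1) ∧
    ∀ y : V → A, ∑ x : V → A, μ x * pinTrans E ρ P φ x y = μ y

/-- The total mixing gap of a graph. -/
def mixingGap {V : Type*} [Fintype V] [DecidableEq V] (E : Finset (V × V)) : ℝ :=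
  sSup {w : ℝ | ∃ S U : Finset V, Disjoint S U ∧
    w = |((E.filter fun e => e.1 ∈ S ∧ e.2 ∈ U).card : ℝ) / (E.card : ℝ) -
      ((S.card : ℝ) * (U.card : ℝ)) / ((Fintype.card V : ℝ) * ((Fintype.card V : ℝ) - 1))|}

open Classical in
/-- Total `μ`-mass of the set of configurations satisfying `p`. -/
def massOf {X : Type*} [Fintype X] (μ : X → ℝ) (p : X → Prop) : ℝ :=
  ∑ x, if p x then μ x else 0


/-!
Stationarity of `μ` makes the expected one-step increment of `W ∘ θ` average to zero under `μ`.
A transition changes one node, hence moves the type by at most `1/n`, so a second-order Taylor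
expansion shows that the expected increment at `x` is `(∇W(θ(x))·m(x) + O(1/n))/n`, where `m` is
the mean drift. On the complete graph the boundary of `x` is within `O(1/n)` of `θ(x) ⊗ θ(x)`,
so `m(x) = D̄(θ(x)) + O(1/n)`. Therefore the `μ`-mean of the nonnegative function
`-∇W(θ)·D̄(θ)` is `O(1/n)`, and Markov's inequality gives the bound.
-/

section MarkovChain
variable {X : Type*} [Fintype X] {T : X → X → ℝ} {μ : X → ℝ}

theorem sum_mul_sum_sub_eq_zero_of_stationary (hT : ∀ x, ∑ y, T x y = 1)
    (hμT : ∀ y, ∑ x, μ x * T x y = μ y) (f : X → ℝ) :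
    ∑ x, μ x * ∑ y, T x y * (f y - f x) = 0 := by
  have hpush : ∑ x, μ x * ∑ y, T x y * f y = ∑ y, μ y * f y := by
    simp_rw [Finset.mul_sum, ← mul_assoc]
    rw [Finset.sum_comm]
    exact Finset.sum_congr rfl fun y _ => by rw [← Finset.sum_mul, hμT]
  have hrow : ∀ x, ∑ y, T x y * (f y - f x) = ∑ y, T x y * f y - f x := fun x => by
    simp only [mul_sub, Finset.sum_sub_distrib, ← Finset.sum_mul, hT, one_mul]
  simp only [hrow]
  simp only [mul_sub, Finset.sum_sub_distrib, hpush, sub_self]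

theorem massOf_gt_neg_ge (hμ0 : ∀ x, 0 ≤ μ x) (hμ1 : ∑ x, μ x = 1) {g : X → ℝ}
    (hg : ∀ x, g x ≤ 0) {c δ : ℝ} (hmean : -c ≤ ∑ x, μ x * g x) (hδ : 0 < δ) :
    massOf μ (fun x => g x > -δ) ≥ 1 - c / δ := by
  have hmarkov : ∀ x, (if g x > -δ then 0 else μ x) ≤ μ x * -g x / δ := by
    intro x
    rw [le_div_iff₀ hδ]
    split_ifs with h
    · nlinarith [hμ0 x, hg x]
    · nlinarith [hμ0 x]
  have hsplit : massOf μ (fun x => g x > -δ) = 1 - ∑ x, if g x > -δ then 0 else μ x := by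
    rw [massOf, ← hμ1, ← Finset.sum_sub_distrib]
    exact Finset.sum_congr rfl fun x _ => by split_ifs <;> ring
  calc 1 - c / δ ≤ 1 - ∑ x, μ x * -g x / δ := by
        rw [← Finset.sum_div]
        gcongr
        simp only [mul_neg, Finset.sum_neg_distrib]
        linarith
    _ ≤ _ := by rw [hsplit]; gcongr with x; exact hmarkov x

theorem massOf_gt_neg_ge_of_drift_le (hT : ∀ x, ∑ y, T x y = 1) (hμ0 : ∀ x, 0 ≤ μ x)
    (hμ1 : ∑ x, μ x = 1) (hμT : ∀ y, ∑ x, μ x * T x y = μ y) {f g : X → ℝ}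
    {a b δ : ℝ} (ha : 0 < a) (hg : ∀ x, g x ≤ 0)
    (hdrift : ∀ x, ∑ y, T x y * (f y - f x) ≤ (g x + b) / a) (hδ : 0 < δ) :
    massOf μ (fun x => g x > -δ) ≥ 1 - b / δ := by
  refine massOf_gt_neg_ge hμ0 hμ1 hg ?_ hδ
  have hle : 0 ≤ (∑ x, μ x * g x + b) / a := by
    calc (0 : ℝ) = ∑ x, μ x * ∑ y, T x y * (f y - f x) :=
          (sum_mul_sum_sub_eq_zero_of_stationary hT hμT f).symm
      _ ≤ ∑ x, μ x * ((g x + b) / a) := by gcongr with x; exacts [hμ0 x, hdrift x]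
      _ = (∑ x, μ x * g x + b) / a := by
        simp only [mul_div_assoc', mul_add, ← Finset.sum_div, Finset.sum_add_distrib,
          ← Finset.sum_mul, hμ1, one_mul]
  rw [le_div_iff₀ ha, zero_mul] at hle
  linarith

end MarkovChain

section Taylor
variable {E : Type*} [NormedAddCommGroup E] [NormedSpace ℝ E] {f : E → ℝ}

theorem Convex.abs_sub_sub_fderiv_le {s : Set E} (hs : Convex ℝ s) (hf : ContDiff ℝ 2 f)
    {L : ℝ} (hL : ∀ z ∈ s, ‖fderiv ℝ (fderiv ℝ f) z‖ ≤ L) {a b : E} (ha : a ∈ s)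
    (hb : b ∈ s) :
    |f b - f a - fderiv ℝ f a (b - a)| ≤ L * ‖b - a‖ ^ 2 := by
  have hf' : Differentiable ℝ (fderiv ℝ f) :=
    (hf.fderiv_right (by norm_num)).differentiable one_ne_zero
  have hlip : ∀ z ∈ segment ℝ a b, ‖fderiv ℝ f z - fderiv ℝ f a‖ ≤ L * ‖b - a‖ := by
    intro z hz
    have hzs : z ∈ s := hs.segment_subset ha hb hz
    calc ‖fderiv ℝ f z - fderiv ℝ f a‖ ≤ L * ‖z - a‖ :=
          hs.norm_image_sub_le_of_norm_fderiv_le (fun w _ => hf' w) hL ha hzs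
      _ ≤ L * ‖b - a‖ := by
          have hL0 : 0 ≤ L := (norm_nonneg (fderiv ℝ (fderiv ℝ f) a)).trans (hL a ha)
          gcongr
          rw [segment_eq_image'] at hz
          obtain ⟨t, ht, rfl⟩ := hz
          rw [add_sub_cancel_left, norm_smul, Real.norm_of_nonneg ht.1]
          exact mul_le_of_le_one_left (norm_nonneg _) ht.2
  have h := (convex_segment a b).norm_image_sub_le_of_norm_fderiv_le'
    (fun z _ => (hf.differentiable (by norm_num)) z) hlip
    (left_mem_segment ℝ a b) (right_mem_segment ℝ a b)
  rw [Real.norm_eq_abs] at h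
  linarith

theorem ContDiff.exists_taylor_bounds_of_isCompact (hf : ContDiff ℝ 2 f) {K : Set E}
    (hK : IsCompact K) (hKc : Convex ℝ K) :
    ∃ M L : ℝ, 0 ≤ M ∧ 0 ≤ L ∧ (∀ a ∈ K, ‖fderiv ℝ f a‖ ≤ M) ∧
      ∀ a ∈ K, ∀ b ∈ K, |f b - f a - fderiv ℝ f a (b - a)| ≤ L * ‖b - a‖ ^ 2 := by
  obtain ⟨M, hM⟩ := hK.exists_bound_of_continuousOn
    (hf.continuous_fderiv (by norm_num)).continuousOn
  obtain ⟨L, hL⟩ := hK.exists_bound_of_continuousOn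
    ((hf.fderiv_right (m := 1) (by norm_num)).continuous_fderiv one_ne_zero).continuousOn
  refine ⟨max M 0, max L 0, le_max_right _ _, le_max_right _ _,
    fun a ha => (hM a ha).trans (le_max_left _ _), fun a ha b hb => ?_⟩
  exact hKc.abs_sub_sub_fderiv_le hf (fun z hz => (hL z hz).trans (le_max_left _ _)) ha hb

end Taylor

section EmpiricalMeasures
variable {V A : Type*} [Fintype V] [DecidableEq A]

theorem card_mul_confType [Nonempty V] (x : V → A) (k : A) :
    (Fintype.card V : ℝ) * confType x k = #{v | x v = k} := by
  rw [confType, mul_div_cancel₀ _ (by positivity)]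

theorem sum_comp_eq_card_mul_sum_confType [Nonempty V] [Fintype A] (x : V → A) (f : A → ℝ) :
    ∑ u, f (x u) = Fintype.card V * ∑ k, confType x k * f k := by
  rw [← Finset.sum_fiberwise' univ x f, Finset.mul_sum]
  simp only [Finset.sum_const, nsmul_eq_mul, ← mul_assoc, card_mul_confType]

theorem confType_mem_stdSimplex [Nonempty V] [Fintype A] (x : V → A) :
    confType x ∈ stdSimplex ℝ A := by
  refine ⟨fun k => by unfold confType; positivity, ?_⟩
  have h := sum_comp_eq_card_mul_sum_confType x fun _ => 1
  simp only [Finset.sum_const, Finset.card_univ, nsmul_eq_mul, mul_one] at h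
  exact (mul_eq_left₀ (by positivity)).mp h.symm

theorem confType_update [DecidableEq V] (x : V → A) (u : V) (j k : A) :
    confType (Function.update x u j) k
      = confType x k
        + ((if j = k then 1 else 0) - (if x u = k then 1 else 0)) / Fintype.card V := by
  have hcount : (#{v | Function.update x u j v = k} : ℝ)
      = #{v | x v = k} + ((if j = k then 1 else 0) - (if x u = k then 1 else 0)) := by
    simp only [Finset.natCast_card_filter, ← Finset.add_sum_erase _ _ (mem_univ u),
      Function.update_self]
    rw [Finset.sum_congr rfl fun v hv => by rw [Function.update_of_ne (Finset.ne_of_mem_erase hv)]]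
    ring
  rw [confType, confType, hcount, add_div]

theorem norm_confType_update_sub_le [DecidableEq V] [Fintype A] (x : V → A) (u : V) (j : A) :
    ‖confType (Function.update x u j) - confType x‖ ≤ 1 / Fintype.card V := by
  refine (pi_norm_le_iff_of_nonneg (by positivity)).mpr fun k => ?_
  rw [Pi.sub_apply, confType_update, add_sub_cancel_left, norm_div, Real.norm_natCast]
  gcongr
  split_ifs <;> norm_num

end EmpiricalMeasures

section Boundary
variable {V A : Type*} [DecidableEq A] {E : Finset (V × V)}

theorem card_mul_boundary (hE : E.Nonempty) (x : V → A) (k ℓ : A) :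
    (E.card : ℝ) * boundary E x k ℓ = #{e ∈ E | x e.1 = k ∧ x e.2 = ℓ} := by
  rw [boundary, mul_div_cancel₀ _ (by simp [hE.ne_empty])]

theorem sum_edges_eq_card_mul_sum_boundary [Fintype A] (hE : E.Nonempty)
    (x : V → A) (g : A → A → ℝ) :
    ∑ e ∈ E, g (x e.1) (x e.2) = E.card * ∑ k, ∑ ℓ, boundary E x k ℓ * g k ℓ := by
  rw [← Finset.sum_fiberwise' E (fun e => (x e.1, x e.2)) (fun p => g p.1 p.2),
    ← Fintype.sum_prod_type', Finset.mul_sum]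
  refine Finset.sum_congr rfl fun p _ => ?_
  simp only [Finset.sum_const, nsmul_eq_mul, ← mul_assoc, card_mul_boundary hE, Prod.ext_iff]

theorem sum_sum_boundary [Fintype A] (hE : E.Nonempty) (x : V → A) :
    ∑ k, ∑ ℓ, boundary E x k ℓ = 1 := by
  have h := sum_edges_eq_card_mul_sum_boundary hE x fun _ _ => 1
  simp only [Finset.sum_const, nsmul_eq_mul, mul_one] at h
  exact (mul_eq_left₀ (by simp [hE.ne_empty])).mp h.symm

end Boundary

def pinRate {V A : Type*} [Fintype V] [DecidableEq V] (E : Finset (V × V)) (ρ : ℝ)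
    (P : A → A → ℝ) (φ : A → A → A → ℝ) (x : V → A) (u : V) (j : A) : ℝ :=
  (1 - ρ) * (1 / (Fintype.card V : ℝ)) * P (x u) j
    + (ρ / (E.card : ℝ)) * ∑ e ∈ E.filter fun e => e.1 = u, φ (x u) j (x e.2)

theorem pinRate_nonneg {V A : Type*} [Fintype V] [DecidableEq V] {E : Finset (V × V)}
    {ρ : ℝ} {P : A → A → ℝ} {φ : A → A → A → ℝ} (hρ0 : 0 ≤ ρ) (hρ1 : ρ ≤ 1)
    (hP0 : ∀ k j, 0 ≤ P k j) (hφ0 : ∀ k j ℓ, 0 ≤ φ k j ℓ) (x : V → A) (u : V) (j : A) :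
    0 ≤ pinRate E ρ P φ x u j := by
  have hρ : 0 ≤ 1 - ρ := by linarith
  exact add_nonneg (mul_nonneg (mul_nonneg hρ (by positivity)) (hP0 _ _))
    (mul_nonneg (by positivity) (Finset.sum_nonneg fun e _ => hφ0 _ _ _))

section SingleSiteUpdates
variable {V A : Type*} [Fintype V] [DecidableEq V] [DecidableEq A]
  {E : Finset (V × V)} {ρ : ℝ} {P : A → A → ℝ} {φ : A → A → A → ℝ}

theorem filter_ne_update_eq_singleton (x : V → A) (u : V) {j : A} (hj : j ≠ x u) :
    (univ.filter fun v => x v ≠ Function.update x u j v) = {u} := by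
  ext v
  by_cases hv : v = u
  · subst hv; simp [Ne.symm hj]
  · simp [hv]

theorem Toff_update (x : V → A) (u : V) {j : A} (hj : j ≠ x u) :
    Toff E ρ P φ x (Function.update x u j) = pinRate E ρ P φ x u j := by
  simp [Toff, pinRate, filter_ne_update_eq_singleton x u hj]

theorem exists_eq_update_of_Toff_ne_zero {x y : V → A} (h : Toff E ρ P φ x y ≠ 0) :
    ∃ u, y u ≠ x u ∧ y = Function.update x u (y u) := by
  have hcard : (univ.filter fun v => x v ≠ y v).card = 1 := by
    by_contra hc
    exact h (by rw [Toff, if_neg hc])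
  obtain ⟨u, hu⟩ := Finset.card_eq_one.mp hcard
  have hdiff : ∀ v, x v ≠ y v ↔ v = u := fun v => by
    simpa using Finset.ext_iff.mp hu v
  refine ⟨u, Ne.symm ((hdiff u).mpr rfl), funext fun v => ?_⟩
  by_cases hv : v = u
  · subst hv; simp
  · rw [Function.update_of_ne hv]
    exact not_not.mp (mt (hdiff v).mp hv) |>.symm

variable [Fintype A]

theorem sum_pinTrans_mul_eq_sum_pinRate (x : V → A) {h : (V → A) → ℝ} (hx : h x = 0) :
    ∑ y, pinTrans E ρ P φ x y * h y
      = ∑ u, ∑ j, pinRate E ρ P φ x u j * h (Function.update x u j) := by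
  have hdiag : ∀ y, pinTrans E ρ P φ x y * h y = Toff E ρ P φ x y * h y := fun y => by
    by_cases hxy : x = y
    · subst hxy; simp [hx]
    · simp [pinTrans, hxy]
  simp only [hdiag, ← Fintype.sum_prod_type']
  symm
  -- `(u, j) ↦ x[u ↦ j]` is a bijection from the pairs with `j ≠ x u` onto the configurations at
  -- distance one; the pairs with `j = x u` contribute nothing because `h x = 0`.
  refine Finset.sum_bij_ne_zero (fun p _ _ => Function.update x p.1 p.2) (fun _ _ _ => mem_univ _)
    ?_ ?_ ?_
  · rintro ⟨u, j⟩ - hne ⟨u', j'⟩ - - heq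
    have hj : j ≠ x u := fun hj => hne (by simp [hj, hx])
    have hu : u = u' := by
      by_contra hu
      have := congrFun heq u
      simp only [Function.update_self, Function.update_of_ne hu] at this
      exact hj this
    subst hu
    simpa using congrFun heq u
  · intro y _ hy
    obtain ⟨u, hu, hyu⟩ := exists_eq_update_of_Toff_ne_zero (left_ne_zero_of_mul hy)
    refine ⟨(u, y u), mem_univ _, ?_, hyu.symm⟩
    rwa [← Toff_update x u hu, ← hyu]
  · rintro ⟨u, j⟩ - hne
    have hj : j ≠ x u := fun hj => hne (by simp [hj, hx])
    rw [Toff_update x u hj]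

theorem sum_pinTrans (x : V → A) : ∑ y, pinTrans E ρ P φ x y = 1 := by
  have hsplit : ∀ y, pinTrans E ρ P φ x y
      = (if x = y then 1 - ∑ z, Toff E ρ P φ x z else 0) + Toff E ρ P φ x y := fun y => by
    by_cases hxy : x = y
    · subst hxy; simp [pinTrans, Toff]
    · simp [pinTrans, hxy]
  simp [hsplit, Finset.sum_add_distrib]

end SingleSiteUpdates

section Drift
variable {V A : Type*} [Fintype V] [DecidableEq V] [Nonempty V] [Fintype A] [DecidableEq A]
  {E : Finset (V × V)} {ρ : ℝ} {P : A → A → ℝ} {φ : A → A → A → ℝ}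

theorem sum_sum_pinRate_mul (hE : E.Nonempty) (x : V → A) (h : A → A → ℝ) :
    ∑ u, ∑ j, pinRate E ρ P φ x u j * h (x u) j
      = (1 - ρ) * ∑ k, confType x k * ∑ j, P k j * h k j
        + ρ * ∑ k, ∑ ℓ, boundary E x k ℓ * ∑ j, φ k j ℓ * h k j := by
  have hself : ∑ u, ∑ j, P (x u) j * h (x u) j
      = Fintype.card V * ∑ k, confType x k * ∑ j, P k j * h k j :=
    sum_comp_eq_card_mul_sum_confType x fun k => ∑ j, P k j * h k j
  have hedges : ∑ u, ∑ j, (∑ e ∈ E.filter fun e => e.1 = u, φ (x u) j (x e.2)) * h (x u) j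
      = E.card * ∑ k, ∑ ℓ, boundary E x k ℓ * ∑ j, φ k j ℓ * h k j := by
    rw [← sum_edges_eq_card_mul_sum_boundary hE x fun k ℓ => ∑ j, φ k j ℓ * h k j,
      ← Finset.sum_fiberwise E Prod.fst]
    refine Finset.sum_congr rfl fun u _ => ?_
    simp only [Finset.sum_mul]
    rw [Finset.sum_comm]
    refine Finset.sum_congr rfl fun e he => ?_
    rw [(Finset.mem_filter.mp he).2]
  have hn : (Fintype.card V : ℝ) ≠ 0 := by positivity
  have hm : (E.card : ℝ) ≠ 0 := by simp [hE.ne_empty]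
  simp only [pinRate, add_mul, Finset.sum_add_distrib, mul_assoc, ← Finset.mul_sum, hself, hedges]
  field_simp

theorem sum_sum_pinRate (hE : E.Nonempty) (hP : ∀ k, ∑ j, P k j = 1)
    (hφ : ∀ k ℓ, ∑ j, φ k j ℓ = 1) (x : V → A) :
    ∑ u, ∑ j, pinRate E ρ P φ x u j = 1 := by
  have h := sum_sum_pinRate_mul (ρ := ρ) (P := P) (φ := φ) hE x fun _ _ => 1
  simp only [mul_one, hP, hφ, sum_sum_boundary hE, (confType_mem_stdSimplex x).2] at h
  linarith

theorem meanDrift_eq (hE : E.Nonempty) (hP : ∀ k, ∑ j, P k j = 1)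
    (hφ : ∀ k ℓ, ∑ j, φ k j ℓ = 1) (x : V → A) (i : A) :
    meanDrift E ρ P φ x i
      = (1 - ρ) * ((∑ j, P j i * confType x j) - confType x i)
        + ρ * Qop φ (boundary E x) i := by
  set e : A → A → ℝ := fun k j => (if j = i then 1 else 0) - if k = i then 1 else 0 with he
  have hgen : meanDrift E ρ P φ x i = ∑ u, ∑ j, pinRate E ρ P φ x u j * e (x u) j := by
    have hn : (Fintype.card V : ℝ) ≠ 0 := by positivity
    rw [meanDrift, sum_pinTrans_mul_eq_sum_pinRate (h := fun y => confType y i - confType x i) x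
      (sub_self _), Finset.mul_sum]
    refine Finset.sum_congr rfl fun u _ => ?_
    rw [Finset.mul_sum]
    refine Finset.sum_congr rfl fun j _ => ?_
    rw [confType_update, add_sub_cancel_left, he]
    field_simp
  have hrow : ∀ (q : A → ℝ) (k : A), ∑ j, q j = 1 →
      ∑ j, q j * e k j = q i - if k = i then 1 else 0 := fun q k hq => by
    simp [he, mul_sub, Finset.sum_sub_distrib, hq]
  rw [hgen, sum_sum_pinRate_mul hE x e]
  simp only [hrow _ _ (hP _), hrow _ _ (hφ _ _)]
  simp only [Qop, mul_sub, Finset.sum_sub_distrib, mul_ite, mul_one, mul_zero]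
  rw [Finset.sum_comm (f := fun k ℓ => boundary E x k ℓ * φ k i ℓ),
    Finset.sum_comm (f := fun k ℓ => if k = i then boundary E x k ℓ else 0)]
  simp only [Finset.sum_ite_eq', mem_univ, if_true, mul_comm (confType x _)]

theorem abs_sum_pinTrans_mul_le (hmodel : IsPinModel E ρ P φ) (x : V → A)
    {h : (V → A) → ℝ} (hx : h x = 0) {c : ℝ}
    (hc : ∀ u j, |h (Function.update x u j)| ≤ c) :
    |∑ y, pinTrans E ρ P φ x y * h y| ≤ c := by
  obtain ⟨hρ0, hρ1, hP0, hP, hφ0, hφ, hE, -⟩ := hmodel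
  have hr := pinRate_nonneg (E := E) hρ0 hρ1 hP0 hφ0 x
  calc |∑ y, pinTrans E ρ P φ x y * h y|
      = |∑ u, ∑ j, pinRate E ρ P φ x u j * h (Function.update x u j)| := by
        rw [sum_pinTrans_mul_eq_sum_pinRate x hx]
    _ ≤ ∑ u, ∑ j, pinRate E ρ P φ x u j * c := by
        refine (Finset.abs_sum_le_sum_abs _ _).trans (Finset.sum_le_sum fun u _ => ?_)
        refine (Finset.abs_sum_le_sum_abs _ _).trans (Finset.sum_le_sum fun j _ => ?_)
        rw [abs_mul, abs_of_nonneg (hr u j)]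
        exact mul_le_mul_of_nonneg_left (hc u j) (hr u j)
    _ = c := by simp only [← Finset.sum_mul, sum_sum_pinRate hE hP hφ, one_mul]

theorem sum_pinTrans_mul_map_confType_sub (F : (A → ℝ) →L[ℝ] ℝ) (x : V → A) :
    ∑ y, pinTrans E ρ P φ x y * F (confType y - confType x)
      = F (meanDrift E ρ P φ x) / Fintype.card V := by
  have hdrift : meanDrift E ρ P φ x
      = (Fintype.card V : ℝ) • ∑ y, pinTrans E ρ P φ x y • (confType y - confType x) := by
    funext i
    simp [meanDrift, Finset.sum_apply]
  rw [hdrift, map_smul, map_sum, smul_eq_mul, mul_div_cancel_left₀ _ (by positivity)]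
  simp only [map_smul, smul_eq_mul]

end Drift

section CompleteGraph
variable {V A : Type*} [Fintype V] [DecidableEq V] [DecidableEq A]

theorem filter_ne_eq_offDiag :
    (univ.filter fun e : V × V => e.1 ≠ e.2) = (univ : Finset V).offDiag := by
  ext; simp

theorem card_filter_offDiag (x : V → A) (j ℓ : A) :
    (#{e ∈ (univ : Finset V).offDiag | x e.1 = j ∧ x e.2 = ℓ} : ℝ)
      = #{v | x v = j} * #{v | x v = ℓ} - if j = ℓ then (#{v | x v = j} : ℝ) else 0 := by
  set S : A → Finset V := fun k => univ.filter fun v => x v = k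
  have hsplit : {e ∈ (univ : Finset V).offDiag | x e.1 = j ∧ x e.2 = ℓ}
      = S j ×ˢ S ℓ \ (S j ∩ S ℓ).diag := by
    ext ⟨u, v⟩
    simp [S]
    grind
  have hcard := Finset.card_sdiff_add_card_eq_card (s := (S j ∩ S ℓ).diag) (t := S j ×ˢ S ℓ)
    fun p hp => by
      simp only [mem_diag, mem_inter] at hp
      exact mem_product.mpr ⟨hp.1.1, hp.2 ▸ hp.1.2⟩
  have hinter : ((S j ∩ S ℓ).card : ℝ) = if j = ℓ then (#{v | x v = j} : ℝ) else 0 := by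
    split_ifs with hjℓ
    · subst hjℓ; simp [S]
    · rw [Finset.card_eq_zero.mpr, Nat.cast_zero]
      exact Finset.disjoint_iff_inter_eq_empty.mp
        (Finset.disjoint_filter.mpr fun v _ h h' => hjℓ (h ▸ h'))
  rw [hsplit, ← hinter, ← Finset.diag_card (S j ∩ S ℓ), eq_sub_iff_add_eq]
  exact_mod_cast hcard.trans (Finset.card_product _ _)

variable [Nonempty V]

theorem boundary_offDiag (hn : 2 ≤ Fintype.card V) (x : V → A) (j ℓ : A) :
    boundary (univ : Finset V).offDiag x j ℓ
      = (Fintype.card V * confType x j * confType x ℓ - if j = ℓ then confType x j else 0)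
        / (Fintype.card V - 1) := by
  have hn' : (2 : ℝ) ≤ Fintype.card V := by exact_mod_cast hn
  rw [boundary, card_filter_offDiag, offDiag_card, card_univ, Nat.cast_sub (Nat.le_mul_self _),
    ← card_mul_confType, ← card_mul_confType]
  have : (Fintype.card V : ℝ) - 1 ≠ 0 := by linarith
  have : (Fintype.card V : ℝ) ≠ 0 := by linarith
  push_cast
  split_ifs
  · field_simp
  · field_simp
    ring

variable [Fintype A] {ρ : ℝ} {P : A → A → ℝ} {φ : A → A → A → ℝ}

theorem sum_boundary_offDiag (hn : 2 ≤ Fintype.card V) (x : V → A) (i : A) :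
    ∑ ℓ, boundary (univ : Finset V).offDiag x i ℓ = confType x i := by
  have hn' : (2 : ℝ) ≤ Fintype.card V := by exact_mod_cast hn
  have : (Fintype.card V : ℝ) - 1 ≠ 0 := by linarith
  simp only [boundary_offDiag hn, ← Finset.sum_div, Finset.sum_sub_distrib, ← Finset.mul_sum,
    (confType_mem_stdSimplex x).2, Finset.sum_ite_eq, mem_univ, if_true]
  field_simp

theorem abs_boundary_offDiag_sub_le (hn : 2 ≤ Fintype.card V) (x : V → A) (j ℓ : A) :
    |boundary (univ : Finset V).offDiag x j ℓ - confType x j * confType x ℓ|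
      ≤ 2 / Fintype.card V := by
  have hn' : (2 : ℝ) ≤ Fintype.card V := by exact_mod_cast hn
  have hθ := mem_Icc_of_mem_stdSimplex (confType_mem_stdSimplex x)
  have hj := hθ j
  have hℓ := hθ ℓ
  have hdiff : boundary (univ : Finset V).offDiag x j ℓ - confType x j * confType x ℓ
      = (confType x j * confType x ℓ - if j = ℓ then confType x j else 0)
        / (Fintype.card V - 1) := by
    have : (Fintype.card V : ℝ) - 1 ≠ 0 := by linarith
    rw [boundary_offDiag hn]
    split_ifs <;> field_simp <;> ring
  have hnum : |confType x j * confType x ℓ - if j = ℓ then confType x j else 0| ≤ 1 := by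
    rw [abs_le]
    constructor <;> split_ifs <;> nlinarith [hj.1, hj.2, hℓ.1, hℓ.2]
  rw [hdiff, abs_div, abs_of_pos (show (0 : ℝ) < Fintype.card V - 1 by linarith)]
  calc _ ≤ 1 / ((Fintype.card V : ℝ) - 1) := by gcongr; linarith
    _ ≤ 2 / Fintype.card V := by
      rw [div_le_div_iff₀ (by linarith) (by linarith)]
      linarith

theorem meanDrift_offDiag_sub_limitDrift (hn : 2 ≤ Fintype.card V)
    (hmodel : IsPinModel (univ : Finset V).offDiag ρ P φ) (x : V → A) (i : A) :
    meanDrift (univ : Finset V).offDiag ρ P φ x i - limitDrift ρ P φ (confType x) i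
      = ρ * ∑ ℓ, ∑ j, (boundary (univ : Finset V).offDiag x j ℓ
          - confType x j * confType x ℓ) * φ j i ℓ := by
  obtain ⟨-, -, -, hP, -, hφ, hE, -⟩ := hmodel
  have hquad : ∑ ℓ, confType x ℓ * ∑ j, φ j i ℓ * confType x j
      = ∑ ℓ, ∑ j, confType x j * confType x ℓ * φ j i ℓ := by
    simp only [Finset.mul_sum]
    exact Finset.sum_congr rfl fun ℓ _ => Finset.sum_congr rfl fun j _ => by ring
  rw [meanDrift_eq hE hP hφ, limitDrift, Qop, sum_boundary_offDiag hn, hquad]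
  simp only [sub_mul, Finset.sum_sub_distrib]
  ring

theorem abs_meanDrift_offDiag_sub_limitDrift_le (hn : 2 ≤ Fintype.card V)
    (hmodel : IsPinModel (univ : Finset V).offDiag ρ P φ) (x : V → A) (i : A) :
    |meanDrift (univ : Finset V).offDiag ρ P φ x i - limitDrift ρ P φ (confType x) i|
      ≤ 2 * Fintype.card A ^ 2 / Fintype.card V := by
  rw [meanDrift_offDiag_sub_limitDrift hn hmodel]
  obtain ⟨hρ0, hρ1, -, -, hφ0, hφ, -⟩ := hmodel
  have hφ01 : ∀ j ℓ, φ j i ℓ ∈ Set.Icc 0 1 := fun j ℓ =>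
    mem_Icc_of_mem_stdSimplex (f := fun k => φ j k ℓ) ⟨fun k => hφ0 j k ℓ, hφ j ℓ⟩ i
  rw [abs_mul, abs_of_nonneg hρ0]
  calc ρ * |∑ ℓ, ∑ j, (boundary (univ : Finset V).offDiag x j ℓ
          - confType x j * confType x ℓ) * φ j i ℓ|
      ≤ 1 * ∑ ℓ : A, ∑ j : A, (2 / Fintype.card V : ℝ) := by
        gcongr
        refine (Finset.abs_sum_le_sum_abs _ _).trans (Finset.sum_le_sum fun ℓ _ => ?_)
        refine (Finset.abs_sum_le_sum_abs _ _).trans (Finset.sum_le_sum fun j _ => ?_)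
        rw [abs_mul, abs_of_nonneg (hφ01 j ℓ).1]
        exact (mul_le_of_le_one_right (abs_nonneg _) (hφ01 j ℓ).2).trans
          (abs_boundary_offDiag_sub_le hn x j ℓ)
    _ = 2 * Fintype.card A ^ 2 / Fintype.card V := by
        simp only [Finset.sum_const, Finset.card_univ, nsmul_eq_mul]
        ring

theorem map_meanDrift_offDiag_le (hn : 2 ≤ Fintype.card V)
    (hmodel : IsPinModel (univ : Finset V).offDiag ρ P φ) (x : V → A) {F : (A → ℝ) →L[ℝ] ℝ}
    {M : ℝ} (hF : ‖F‖ ≤ M) :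
    F (meanDrift univ.offDiag ρ P φ x)
      ≤ F (limitDrift ρ P φ (confType x)) + M * (2 * Fintype.card A ^ 2 / Fintype.card V) := by
  have hnorm : ‖meanDrift univ.offDiag ρ P φ x - limitDrift ρ P φ (confType x)‖
      ≤ 2 * Fintype.card A ^ 2 / Fintype.card V :=
    (pi_norm_le_iff_of_nonneg (by positivity)).mpr
      (abs_meanDrift_offDiag_sub_limitDrift_le hn hmodel x)
  have := (le_abs_self _).trans ((F.le_opNorm _).trans
    (mul_le_mul hF hnorm (norm_nonneg _) ((norm_nonneg F).trans hF)))
  rw [map_sub] at this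
  linarith

theorem sum_pinTrans_mul_sub_le (hn : 2 ≤ Fintype.card V)
    (hmodel : IsPinModel (univ : Finset V).offDiag ρ P φ) {W : (A → ℝ) → ℝ} {M L : ℝ}
    (hL0 : 0 ≤ L) (hM : ∀ a ∈ stdSimplex ℝ A, ‖fderiv ℝ W a‖ ≤ M)
    (hL : ∀ a ∈ stdSimplex ℝ A, ∀ b ∈ stdSimplex ℝ A,
      |W b - W a - fderiv ℝ W a (b - a)| ≤ L * ‖b - a‖ ^ 2) (x : V → A) :
    ∑ y, pinTrans (univ : Finset V).offDiag ρ P φ x y * (W (confType y) - W (confType x))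
      ≤ (fderiv ℝ W (confType x) (limitDrift ρ P φ (confType x))
          + (L + 2 * M * Fintype.card A ^ 2) / Fintype.card V) / Fintype.card V := by
  set n : ℝ := (Fintype.card V : ℝ)
  set F := fderiv ℝ W (confType x)
  have hn0 : 0 < n := by positivity
  have hθ := confType_mem_stdSimplex x
  have hsplit : ∑ y, pinTrans univ.offDiag ρ P φ x y * (W (confType y) - W (confType x))
      = ∑ y, pinTrans univ.offDiag ρ P φ x y * F (confType y - confType x)
        + ∑ y, pinTrans univ.offDiag ρ P φ x y
            * (W (confType y) - W (confType x) - F (confType y - confType x)) := by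
    rw [← Finset.sum_add_distrib]
    exact Finset.sum_congr rfl fun y _ => by ring
  have hdrift := map_meanDrift_offDiag_le hn hmodel x (hM _ hθ)
  have hrem : ∑ y, pinTrans univ.offDiag ρ P φ x y
      * (W (confType y) - W (confType x) - F (confType y - confType x)) ≤ L / n ^ 2 := by
    refine (le_abs_self _).trans (abs_sum_pinTrans_mul_le hmodel x (by simp) fun u j => ?_)
    calc _ ≤ L * ‖confType (Function.update x u j) - confType x‖ ^ 2 :=
          hL _ hθ _ (confType_mem_stdSimplex _)
      _ ≤ L * (1 / n) ^ 2 := by gcongr; exact norm_confType_update_sub_le x u j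
      _ = L / n ^ 2 := by ring
  rw [hsplit, sum_pinTrans_mul_map_confType_sub]
  calc _ ≤ (F (limitDrift ρ P φ (confType x)) + M * (2 * Fintype.card A ^ 2 / n)) / n
        + L / n ^ 2 := by gcongr
    _ = _ := by field_simp; ring

end CompleteGraph

theorem concentration_complete_graph_general {A : Type*} [Fintype A] [DecidableEq A]
    (W : (A → ℝ) → ℝ) (hW : ContDiff ℝ 2 W) :
    ∃ C > (0 : ℝ), ∀ (V : Type) [Fintype V] [DecidableEq V],
      ∀ (E : Finset (V × V)), E = Finset.univ.filter (fun e : V × V => e.1 ≠ e.2) →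
      2 ≤ Fintype.card V →
      ∀ (ρ : ℝ) (P : A → A → ℝ) (φ : A → A → A → ℝ), IsPinModel E ρ P φ →
      ∀ (μ : (V → A) → ℝ), IsStationaryPIN E ρ P φ μ →
      (∀ θ : A → ℝ, inSimplex θ → fderiv ℝ W θ (limitDrift ρ P φ θ) ≤ 0) →
      ∀ δ > (0 : ℝ),
        massOf μ (fun x =>
            fderiv ℝ W (confType x) (limitDrift ρ P φ (confType x)) > -δ) ≥
          1 - C / ((Fintype.card V : ℝ) * δ) := by
  obtain ⟨M, L, hM0, hL0, hM, hL⟩ :=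
    hW.exists_taylor_bounds_of_isCompact (isCompact_stdSimplex ℝ A) (convex_stdSimplex ℝ A)
  refine ⟨L + 2 * M * Fintype.card A ^ 2 + 1, by positivity, ?_⟩
  intro V _ _ E hE hn ρ P φ hmodel μ ⟨hμ0, hμ1, hμT⟩ hWdrift δ hδ
  rw [filter_ne_eq_offDiag] at hE
  subst hE
  have : Nonempty V := Fintype.card_pos_iff.mp (by omega)
  refine (massOf_gt_neg_ge_of_drift_le sum_pinTrans hμ0 hμ1 hμT (by positivity)
    (fun x => hWdrift _ (confType_mem_stdSimplex x))
    (sum_pinTrans_mul_sub_le hn hmodel hL0 hM hL) hδ).trans' ?_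
  rw [div_div]
  gcongr 1 - ?_ / _
  linarith

/-- Corollary: concentration for mean-field (complete-graph) PIN models.
If `V` is `C²` and `∇V(θ)·D̄(θ) ≤ 0` on the simplex, then, for a constant `C > 0`
depending only on `V`, every stationary distribution of a PIN model on the complete
graph with `n ≥ 2` nodes satisfies `μ({x : ∇V(θ(x))·D̄(θ(x)) > −δ}) ≥ 1 − C/(nδ)`. -/
theorem concentration_complete_graph {A : Type*} [Fintype A] [DecidableEq A] [Nonempty A]
    (W : (A → ℝ) → ℝ) (hW : ContDiff ℝ 2 W) :
    ∃ C > (0 : ℝ), ∀ (V : Type) [Fintype V] [DecidableEq V],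
      ∀ (E : Finset (V × V)), E = Finset.univ.filter (fun e : V × V => e.1 ≠ e.2) →
      2 ≤ Fintype.card V →
      ∀ (ρ : ℝ) (P : A → A → ℝ) (φ : A → A → A → ℝ), IsPinModel E ρ P φ →
      ∀ (μ : (V → A) → ℝ), IsStationaryPIN E ρ P φ μ →
      (∀ θ : A → ℝ, inSimplex θ → fderiv ℝ W θ (limitDrift ρ P φ θ) ≤ 0) →
      ∀ δ > (0 : ℝ),
        massOf μ (fun x =>
            fderiv ℝ W (confType x) (limitDrift ρ P φ (confType x)) > -δ) ≥
          1 - C / ((Fintype.card V : ℝ) * δ) :=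
  concentration_complete_graph_general W hW

end
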